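/- There exists an absolute constant c ≥ 1 such that for all real numbers x and t with x > 2 and 2x < t < x², c⁻¹ · 1/((x t)^{1/2} log(t/x)) ≤ ∫_{3/2}^{x} dv / (v^{1/2} (log v)(v x + t)) ≤ c · 1/((x t)^{1/2} log(t/x)). -/

import Mathlib

open MeasureTheory Real

/-! Write t = s x, so that 2 < s < x and √(x t) log (t / x) = x √s log s.

The integrand is decreasing, so its integral over [3s/4, s] is already at least
(s/4) times its value at s, which is 1 / (8 x √s log s).

For the upper bound split [3/2, x] at m = max (3/2) √s and at s. On the first two pieces
vx + t ≥ t and log v ≥ log(3/2) resp. log v ≥ (log s)/2, and integrating v^(-1/2) gives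
O(√m / t) and O(√s / (t log s)); the first is small enough because log s ≤ 4 s^(1/4).
On [s, x] one uses vx + t ≥ vx and log v ≥ log s, and v^(-3/2) integrates to O(1/√s). -/

open Set intervalIntegral

lemma integral_rpow_neg_one_half (a b : ℝ) :
    ∫ v in a..b, v ^ (-(1 / 2) : ℝ) = 2 * (√b - √a) := by
  rw [integral_rpow (Or.inl (by norm_num)), sqrt_eq_rpow, sqrt_eq_rpow]
  norm_num
  ring

lemma integral_rpow_neg_three_halves {a b : ℝ} (ha : 0 < a) (hb : 0 < b) :
    ∫ v in a..b, v ^ (-(3 / 2) : ℝ) = 2 * ((√a)⁻¹ - (√b)⁻¹) := by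
  have h0 : (0 : ℝ) ∉ uIcc a b := fun h => (lt_min ha hb).not_ge h.1
  rw [integral_rpow (Or.inr ⟨by norm_num, h0⟩), sqrt_eq_rpow, sqrt_eq_rpow,
    ← rpow_neg ha.le, ← rpow_neg hb.le]
  norm_num
  ring

noncomputable def integrand (x t v : ℝ) : ℝ := 1 / (√v * log v * (v * x + t))

section
variable {x t : ℝ}

lemma integrand_denom_pos (hx : 0 ≤ x) (ht : 0 < t) {v : ℝ} (hv : 1 < v) :
    0 < √v * log v * (v * x + t) := by
  have := log_pos hv
  have : 0 < √v := sqrt_pos.mpr (by linarith)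
  have : 0 ≤ v * x := mul_nonneg (by linarith) hx
  positivity

lemma integrand_pos (hx : 0 ≤ x) (ht : 0 < t) {v : ℝ} (hv : 1 < v) : 0 < integrand x t v :=
  one_div_pos.mpr (integrand_denom_pos hx ht hv)

lemma continuousOn_integrand (hx : 0 ≤ x) (ht : 0 < t) :
    ContinuousOn (integrand x t) (Ioi 1) := by
  refine continuousOn_const.div (ContinuousOn.mul ?_ (by fun_prop))
    fun v hv => (integrand_denom_pos hx ht hv).ne'
  exact continuous_sqrt.continuousOn.mul
    (continuousOn_log.mono fun v (hv : 1 < v) => (zero_lt_one.trans hv).ne')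

lemma intervalIntegrable_integrand (hx : 0 ≤ x) (ht : 0 < t) {a b : ℝ} (ha : 1 < a)
    (hb : 1 < b) : IntervalIntegrable (integrand x t) volume a b :=
  ((continuousOn_integrand hx ht).mono fun _ hv => (lt_min ha hb).trans_le hv.1)
    |>.intervalIntegrable

lemma integrand_antitoneOn (hx : 0 ≤ x) (ht : 0 < t) : AntitoneOn (integrand x t) (Ioi 1) := by
  intro u (hu : 1 < u) v (hv : 1 < v) huv
  refine one_div_le_one_div_of_le (integrand_denom_pos hx ht hu) ?_
  have := log_pos hu
  have := log_pos hv
  gcongr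

lemma integrand_le_rpow_neg_one_half (hx : 0 ≤ x) (ht : 0 < t) {a v : ℝ} (ha : 1 < a)
    (hav : a ≤ v) : integrand x t v ≤ (log a * t)⁻¹ * v ^ (-(1 / 2) : ℝ) := by
  have hv : 0 < v := by linarith
  have := log_pos ha
  have : 0 ≤ v * x := by positivity
  have : log a ≤ log v := log_le_log (by linarith) hav
  rw [rpow_neg hv.le, ← sqrt_eq_rpow, ← mul_inv, integrand, one_div]
  refine inv_anti₀ (by positivity) ?_
  calc log a * t * √v ≤ log v * (v * x + t) * √v := by gcongr <;> linarith
    _ = _ := by ring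

lemma integrand_le_rpow_neg_three_halves (hx : 0 < x) (ht : 0 ≤ t) {a v : ℝ} (ha : 1 < a)
    (hav : a ≤ v) : integrand x t v ≤ (log a * x)⁻¹ * v ^ (-(3 / 2) : ℝ) := by
  have hv : 0 < v := by linarith
  have := log_pos ha
  rw [rpow_neg hv.le, show (3 / 2 : ℝ) = 1 + 1 / 2 by norm_num, rpow_add hv, rpow_one,
    ← sqrt_eq_rpow, ← mul_inv, integrand, one_div]
  have : log a ≤ log v := log_le_log (by linarith) hav
  refine inv_anti₀ (by positivity) ?_
  calc log a * x * (v * √v) = log a * (v * x) * √v := by ring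
    _ ≤ log v * (v * x + t) * √v := by gcongr <;> linarith
    _ = _ := by ring

lemma integral_integrand_le_sqrt (hx : 0 ≤ x) (ht : 0 < t) {a b : ℝ} (ha : 1 < a)
    (hab : a ≤ b) : ∫ v in a..b, integrand x t v ≤ 2 * √b / (log a * t) := by
  have := log_pos ha
  calc ∫ v in a..b, integrand x t v
      ≤ ∫ v in a..b, (log a * t)⁻¹ * v ^ (-(1 / 2) : ℝ) :=
        integral_mono_on hab (intervalIntegrable_integrand hx ht ha (by linarith))
          ((intervalIntegrable_rpow' (by norm_num)).const_mul _)
          fun v hv => integrand_le_rpow_neg_one_half hx ht ha hv.1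
    _ = 2 * (√b - √a) / (log a * t) := by
        rw [intervalIntegral.integral_const_mul, integral_rpow_neg_one_half]; ring
    _ ≤ 2 * √b / (log a * t) := by gcongr; linarith [sqrt_nonneg a]

lemma integral_integrand_le_inv_sqrt (hx : 0 < x) (ht : 0 < t) {a b : ℝ} (ha : 1 < a)
    (hab : a ≤ b) : ∫ v in a..b, integrand x t v ≤ 2 / (√a * log a * x) := by
  have := log_pos ha
  have h0 : (0 : ℝ) ∉ uIcc a b := fun h => (lt_min (by linarith) (by linarith)).not_ge h.1
  calc ∫ v in a..b, integrand x t v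
      ≤ ∫ v in a..b, (log a * x)⁻¹ * v ^ (-(3 / 2) : ℝ) :=
        integral_mono_on hab (intervalIntegrable_integrand hx.le ht ha (by linarith))
          ((intervalIntegrable_rpow (Or.inr h0)).const_mul _)
          fun v hv => integrand_le_rpow_neg_three_halves hx ht.le ha hv.1
    _ = 2 * ((√a)⁻¹ - (√b)⁻¹) / (log a * x) := by
        rw [intervalIntegral.integral_const_mul,
          integral_rpow_neg_three_halves (by linarith) (by linarith)]
        ring
    _ ≤ 2 * (√a)⁻¹ / (log a * x) := by gcongr; linarith [inv_nonneg.mpr (sqrt_nonneg b)]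
    _ = 2 / (√a * log a * x) := by ring

end

lemma one_div_three_le_log_three_halves : 1 / 3 ≤ log (3 / 2) := by
  have := one_sub_inv_le_log_of_pos (by norm_num : (0 : ℝ) < 3 / 2)
  norm_num at this ⊢
  linarith

lemma sqrt_max_mul_log_le {s : ℝ} (hs : 2 ≤ s) :
    √(max (3 / 2) √s) * log s ≤ 6 * √s := by
  have hS : 1 ≤ √s := one_le_sqrt.mpr (by linarith)
  have hm : max (3 / 2) √s ≤ 2 * √s := max_le (by linarith) (by linarith)
  have hL : log s ≤ 4 * √√s := by
    have := log_le_rpow_div (sqrt_nonneg s) (by norm_num : (0 : ℝ) < 1 / 2)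
    rw [log_sqrt (by linarith), ← sqrt_eq_rpow] at this
    linarith
  have h2 : √2 ≤ 3 / 2 := (sqrt_le_left (by norm_num)).mpr (by norm_num)
  calc √(max (3 / 2) √s) * log s ≤ √(2 * √s) * (4 * √√s) := by
        gcongr
        exact log_nonneg (by linarith)
    _ = 4 * √2 * √s := by
        rw [sqrt_mul zero_le_two, mul_mul_mul_comm, ← sqrt_mul (sqrt_nonneg s),
          sqrt_mul_self (sqrt_nonneg s)]
        ring
    _ ≤ 6 * √s := by gcongr; linarith

section
variable {x s : ℝ}

lemma le_integral_integrand (hx : 0 < x) (hs : 2 ≤ s) (hsx : s ≤ x) :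
    8⁻¹ * (1 / (x * √s * log s)) ≤ ∫ v in (3 / 2)..x, integrand x (s * x) v := by
  have hsx0 : 0 < s * x := by positivity
  have hL := log_pos (by linarith : 1 < s)
  calc 8⁻¹ * (1 / (x * √s * log s))
      = ∫ _ in (3 * s / 4)..s, integrand x (s * x) s := by
        rw [intervalIntegral.integral_const, smul_eq_mul, integrand]
        field_simp
        norm_num
    _ ≤ ∫ v in (3 * s / 4)..s, integrand x (s * x) v :=
        integral_mono_on (by linarith) intervalIntegrable_const
          (intervalIntegrable_integrand hx.le hsx0 (by linarith) (by linarith))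
          fun v hv => integrand_antitoneOn hx.le hsx0 (show 1 < v by linarith [hv.1])
            (show 1 < s by linarith) hv.2
    _ ≤ ∫ v in (3 / 2)..x, integrand x (s * x) v :=
        integral_mono_interval (by linarith) (by linarith) hsx
          ((ae_restrict_mem measurableSet_Ioc).mono fun v hv =>
            (integrand_pos hx.le hsx0 (by linarith [hv.1])).le)
          (intervalIntegrable_integrand hx.le hsx0 (by norm_num) (by linarith))

lemma integral_integrand_le (hx : 0 < x) (hs : 2 ≤ s) (hsx : s ≤ x) :
    ∫ v in (3 / 2)..x, integrand x (s * x) v ≤ 42 * (1 / (x * √s * log s)) := by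
  have hsx0 : 0 < s * x := by positivity
  have hL := log_pos (by linarith : 1 < s)
  have hS0 : 0 < √s := sqrt_pos.mpr (by linarith)
  have hD : 1 / (x * √s * log s) = √s / (log s * (s * x)) := by
    field_simp
    rw [sq_sqrt (by linarith)]
  set m := max (3 / 2) √s
  have hm32 : 3 / 2 ≤ m := le_max_left _ _
  have hms : m ≤ s := max_le (by linarith) (sqrt_le_self_iff.mpr (Or.inr (by linarith)))
  have hlogm : log s / 2 ≤ log m := by
    rw [← log_sqrt (by linarith)]
    exact log_le_log hS0 (le_max_right _ _)
  have hlog32 := one_div_three_le_log_three_halves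
  have hI {a b : ℝ} (ha : 3 / 2 ≤ a) (hb : 3 / 2 ≤ b) :
      IntervalIntegrable (integrand x (s * x)) volume a b :=
    intervalIntegrable_integrand hx.le hsx0 (by linarith) (by linarith)
  have hsplit : ∫ v in (3 / 2)..x, integrand x (s * x) v =
      (∫ v in (3 / 2)..m, integrand x (s * x) v) + (∫ v in m..s, integrand x (s * x) v) +
        ∫ v in s..x, integrand x (s * x) v := by
    rw [integral_add_adjacent_intervals (hI le_rfl hm32) (hI hm32 (by linarith)),
      integral_add_adjacent_intervals (hI le_rfl (by linarith)) (hI (by linarith) (by linarith))]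
  have h1 := integral_integrand_le_sqrt hx.le hsx0 (by norm_num) hm32
  have h2 := integral_integrand_le_sqrt hx.le hsx0 (by linarith) hms
  have h3 := integral_integrand_le_inv_sqrt hx hsx0 (by linarith) hsx
  have h1' : 2 * √m / (log (3 / 2) * (s * x)) ≤ 36 * (1 / (x * √s * log s)) :=
    calc 2 * √m / (log (3 / 2) * (s * x)) ≤ 2 * √m / (1 / 3 * (s * x)) := by gcongr
      _ = 6 * (√m * log s) / (log s * (s * x)) := by field_simp; norm_num
      _ ≤ 6 * (6 * √s) / (log s * (s * x)) := by gcongr 6 * ?_ / _; exact sqrt_max_mul_log_le hs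
      _ = 36 * (1 / (x * √s * log s)) := by rw [hD]; ring
  have h2' : 2 * √s / (log m * (s * x)) ≤ 4 * (1 / (x * √s * log s)) :=
    calc 2 * √s / (log m * (s * x)) ≤ 2 * √s / (log s / 2 * (s * x)) := by gcongr
      _ = 4 * (1 / (x * √s * log s)) := by rw [hD]; field_simp; ring
  have h3' : 2 / (√s * log s * x) = 2 * (1 / (x * √s * log s)) := by ring
  linarith

end

theorem stmt_19 :
    ∃ c : ℝ, 1 ≤ c ∧ ∀ x t : ℝ, 2 < x → 2 * x < t → t < x ^ 2 →
      c⁻¹ * (1 / (Real.sqrt (x * t) * Real.log (t / x)))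
        ≤ (∫ v in (3/2 : ℝ)..x, 1 / (Real.sqrt v * Real.log v * (v * x + t))) ∧
      (∫ v in (3/2 : ℝ)..x, 1 / (Real.sqrt v * Real.log v * (v * x + t)))
        ≤ c * (1 / (Real.sqrt (x * t) * Real.log (t / x))) := by
  refine ⟨42, by norm_num, fun x t hx2 hxt htx => ?_⟩
  have hx : 0 < x := by linarith
  obtain ⟨s, rfl⟩ : ∃ s, t = s * x := ⟨t / x, by field_simp⟩
  have hs : 2 ≤ s := le_of_lt (lt_of_mul_lt_mul_right hxt hx.le)
  have hsx : s ≤ x := le_of_lt (lt_of_mul_lt_mul_right (by nlinarith) hx.le)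
  have hnorm : √(x * (s * x)) * log (s * x / x) = x * √s * log s := by
    rw [mul_div_cancel_right₀ s hx.ne', show x * (s * x) = x ^ 2 * s by ring,
      sqrt_mul (sq_nonneg x), sqrt_sq hx.le]
  rw [hnorm]
  refine ⟨le_trans ?_ (le_integral_integrand hx hs hsx), integral_integrand_le hx hs hsx⟩
  have := log_pos (by linarith : 1 < s)
  gcongr
  norm_num
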